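/- arXiv:0908.4025 — 3 statements merged into one kernel-verified Lean document; each statement's English description precedes it below -/
import Mathlib

section
/- For all n, m ≥ 1 there exists an invertible element δ of the monoid SB_{n+m}, which is a product of the generators σ_k^{±1} only, such that δ · (β ∗ α) = (α ∗ β) · δ for all α ∈ SB_n and β ∈ SB_m; that is, β ∗ α and α ∗ β are conjugate in SB_{n+m} by a single invertible braid independent of α and β. -/
open scoped TensorProduct DirectSum

set_option synthInstance.maxHeartbeats 1000000
set_option maxHeartbeats 2000000

namespace SingularHOMFLYPT

/-- Generators of the singular braid monoid on `n` strands: `pos i` is `σ_{i+1}`,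
`neg i` is `σ_{i+1}⁻¹` and `tau i` is `τ_{i+1}`, for `i : Fin (n-1)`. -/
inductive SBGen (n : ℕ) : Type
  | pos : Fin (n - 1) → SBGen n
  | neg : Fin (n - 1) → SBGen n
  | tau : Fin (n - 1) → SBGen n

open FreeMonoid in
/-- The defining relations of the singular braid monoid `SB_n` (Baez, Birman). -/
inductive SBRel (n : ℕ) : FreeMonoid (SBGen n) → FreeMonoid (SBGen n) → Prop
  | inv_right (i : Fin (n - 1)) : SBRel n (of (.pos i) * of (.neg i)) 1
  | inv_left (i : Fin (n - 1)) : SBRel n (of (.neg i) * of (.pos i)) 1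
  | sigma_tau (i : Fin (n - 1)) :
      SBRel n (of (.pos i) * of (.tau i)) (of (.tau i) * of (.pos i))
  | braid (i j : Fin (n - 1)) (h : (i : ℕ) + 1 = j ∨ (j : ℕ) + 1 = i) :
      SBRel n (of (.pos i) * of (.pos j) * of (.pos i))
        (of (.pos j) * of (.pos i) * of (.pos j))
  | braid_tau (i j : Fin (n - 1)) (h : (i : ℕ) + 1 = j ∨ (j : ℕ) + 1 = i) :
      SBRel n (of (.pos i) * of (.pos j) * of (.tau i))
        (of (.tau j) * of (.pos i) * of (.pos j))
  | comm_ss (i j : Fin (n - 1)) (h : (i : ℕ) + 2 ≤ j ∨ (j : ℕ) + 2 ≤ i) :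
      SBRel n (of (.pos i) * of (.pos j)) (of (.pos j) * of (.pos i))
  | comm_st (i j : Fin (n - 1)) (h : (i : ℕ) + 2 ≤ j ∨ (j : ℕ) + 2 ≤ i) :
      SBRel n (of (.pos i) * of (.tau j)) (of (.tau j) * of (.pos i))
  | comm_tt (i j : Fin (n - 1)) (h : (i : ℕ) + 2 ≤ j ∨ (j : ℕ) + 2 ≤ i) :
      SBRel n (of (.tau i) * of (.tau j)) (of (.tau j) * of (.tau i))

/-- The congruence on the free monoid generated by the singular braid relations. -/
def SBcon (n : ℕ) : Con (FreeMonoid (SBGen n)) := conGen (SBRel n)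

/-- The singular braid monoid on `n` strands, as a presented monoid. -/
abbrev SB (n : ℕ) : Type := (SBcon n).Quotient

/-- The canonical projection from the free monoid onto `SB n`. -/
def SB.mk {n : ℕ} : FreeMonoid (SBGen n) →* SB n := Con.mk' (SBcon n)

/-- The generator `σ_{i+1}` of `SB n`. -/
def sG {n : ℕ} (i : Fin (n - 1)) : SB n := SB.mk (.of (.pos i))

/-- The generator `σ_{i+1}⁻¹` of `SB n`. -/
def sInvG {n : ℕ} (i : Fin (n - 1)) : SB n := SB.mk (.of (.neg i))

/-- The generator `τ_{i+1}` of `SB n`. -/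
def tauG {n : ℕ} (i : Fin (n - 1)) : SB n := SB.mk (.of (.tau i))

theorem SB.sound {n : ℕ} {a b : FreeMonoid (SBGen n)} (h : SBRel n a b) :
    SB.mk a = SB.mk b :=
  Con.eq _ |>.2 (ConGen.Rel.of a b h)

/-- Lift a map on generators to a monoid homomorphism on `SB n`. -/
def SB.lift {n : ℕ} {M : Type*} [Monoid M] (f : SBGen n → M)
    (h : ∀ a b, SBRel n a b → FreeMonoid.lift f a = FreeMonoid.lift f b) :
    SB n →* M :=
  Con.lift _ (FreeMonoid.lift f)
    (Con.conGen_le.2 fun a b hab => (Con.ker_rel _).2 (h a b hab))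

@[simp] theorem SB.lift_mk {n : ℕ} {M : Type*} [Monoid M] (f : SBGen n → M)
    (h : ∀ a b, SBRel n a b → FreeMonoid.lift f a = FreeMonoid.lift f b)
    (w : FreeMonoid (SBGen n)) :
    SB.lift f h (SB.mk w) = FreeMonoid.lift f w :=
  Con.lift_coe _ w

/-- The number of singular points (`τ`-letters) of a generator. -/
def degGen {n : ℕ} : SBGen n → Multiplicative ℕ
  | .tau _ => Multiplicative.ofAdd 1
  | _ => 1

/-- The monoid homomorphism `deg : SB n →* (ℕ, +)` counting singular points. -/
def degM {n : ℕ} : SB n →* Multiplicative ℕ :=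
  SB.lift degGen (by
    rintro a b h
    cases h <;> simp [degGen, mul_comm])
/-- Shifting generators by `k`, viewing `SB n` inside `SB N` (strands `k+1, …, k+n`). -/
def shiftGen {n : ℕ} (N k : ℕ) (h : k + n ≤ N) : SBGen n → SBGen N
  | .pos i => .pos ⟨k + i, by have := i.2; omega⟩
  | .neg i => .neg ⟨k + i, by have := i.2; omega⟩
  | .tau i => .tau ⟨k + i, by have := i.2; omega⟩

theorem shiftGen_rel {n : ℕ} (N k : ℕ) (h : k + n ≤ N) {a b : FreeMonoid (SBGen n)}
    (hab : SBRel n a b) :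
    SBRel N (FreeMonoid.map (shiftGen N k h) a) (FreeMonoid.map (shiftGen N k h) b) := by
  cases hab <;>
    simp only [map_mul, map_one, FreeMonoid.map_of, shiftGen] <;>
    first
      | exact SBRel.inv_right _
      | exact SBRel.inv_left _
      | exact SBRel.sigma_tau _
      | (rename_i i j hij; exact SBRel.braid _ _ (by simp; omega))
      | (rename_i i j hij; first
          | exact SBRel.braid_tau _ _ (by simp; omega)
          | exact SBRel.comm_ss _ _ (by simp; omega)
          | exact SBRel.comm_st _ _ (by simp; omega)
          | exact SBRel.comm_tt _ _ (by simp; omega))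

/-- The monoid homomorphism `SB n →* SB N` placing a braid on the strands `k+1, …, k+n`. -/
def shiftHom {n : ℕ} (N k : ℕ) (h : k + n ≤ N) : SB n →* SB N :=
  Con.lift _ (SB.mk.comp (FreeMonoid.map (shiftGen N k h)))
    (Con.conGen_le.2 fun a b hab => (Con.ker_rel _).2 (SB.sound (shiftGen_rel N k h hab)))

/-- The natural inclusion `SB n →* SB N` (adding trivial strands on the right). -/
def inclSB {n : ℕ} (N : ℕ) (h : n ≤ N) : SB n →* SB N := shiftHom N 0 (by omega)

/-- `α ∗ β`: the braid obtained by placing `β` (on `m` strands) above (to the right of)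
`α` (on `n` strands), realized in `SB N` for `n + m ≤ N`. -/
def starIn {n m : ℕ} (N : ℕ) (h : n + m ≤ N) (α : SB n) (β : SB m) : SB N :=
  inclSB N (by omega) α * shiftHom N n h β
@[simp] theorem shiftHom_mk {n : ℕ} (N k : ℕ) (h : k + n ≤ N) (w : FreeMonoid (SBGen n)) :
    shiftHom N k h (SB.mk w) = SB.mk (FreeMonoid.map (shiftGen N k h) w) :=
  Con.lift_coe _ w

theorem shiftHom_sG {n : ℕ} (N k : ℕ) (h : k + n ≤ N) (i : Fin (n - 1)) :
    shiftHom N k h (sG i) = sG ⟨k + i.1, by have := i.2; omega⟩ := rfl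

theorem inclSB_sG {n : ℕ} (N : ℕ) (h : n ≤ N) (i : Fin (n - 1)) :
    inclSB N h (sG i) = sG ⟨0 + i.1, by have := i.2; omega⟩ := rfl

noncomputable section

/-- The field `ℂ(q)` of rational functions over `ℂ` in the variable `q`. -/
abbrev Kq : Type := RatFunc ℂ

/-- The field `ℂ(q,z) = ℂ(q)(z)` of rational functions over `ℂ` in the variables `q, z`. -/
abbrev Lqz : Type := RatFunc Kq

/-- The variable `q`, as an element of `ℂ(q)`. -/
def qK : Kq := RatFunc.X

/-- The variable `z`, as an element of `ℂ(q,z)`. -/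
def zL : Lqz := RatFunc.X

/-- The variable `q`, as an element of `ℂ(q,z)`. -/
def qL : Lqz := algebraMap Kq Lqz qK

/-- The Hecke relations `σ_k² = (q-1)σ_k + q` in the monoid algebra `ℂ(q)[SB_n]`. -/
def HeckeRel (n : ℕ) : MonoidAlgebra Kq (SB n) → MonoidAlgebra Kq (SB n) → Prop :=
  fun x y => ∃ i : Fin (n - 1),
    x = MonoidAlgebra.of Kq (SB n) (sG i) ^ 2 ∧
    y = (qK - 1) • MonoidAlgebra.of Kq (SB n) (sG i) + qK • 1

/-- The singular Hecke algebra `H(SB_n)`: the quotient of `ℂ(q)[SB_n]` by the two-sided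
ideal generated by the elements `σ_k² - (q-1)σ_k - q`. -/
abbrev Hecke (n : ℕ) : Type := RingQuot (HeckeRel n)

/-- The image of a singular braid in the singular Hecke algebra. -/
def heckeOf {n : ℕ} (β : SB n) : Hecke n :=
  RingQuot.mkAlgHom Kq (HeckeRel n) (MonoidAlgebra.of Kq (SB n) β)

/-- `H_z(SB_n) := ℂ(q,z) ⊗_{ℂ(q)} H(SB_n)`. -/
abbrev HeckeZ (n : ℕ) : Type := Lqz ⊗[Kq] Hecke n

/-- The image of a singular braid in `H_z(SB_n)`. -/
def ofHZ {n : ℕ} (β : SB n) : HeckeZ n := (1 : Lqz) ⊗ₜ[Kq] heckeOf β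

/-- The algebra homomorphism `H(SB_n) → H(SB_{n+1})` induced by the natural inclusion
`SB_n ↪ SB_{n+1}`. -/
def heckeIncl (n : ℕ) : Hecke n →ₐ[Kq] Hecke (n + 1) :=
  RingQuot.liftAlgHom Kq
    ⟨((RingQuot.mkAlgHom Kq (HeckeRel (n + 1))).comp
        (MonoidAlgebra.mapDomainAlgHom Kq Kq (inclSB (n + 1) (Nat.le_succ n)))),
      by
        rintro x y ⟨i, rfl, rfl⟩
        have hi := i.2
        set i' : Fin ((n + 1) - 1) := ⟨0 + i.1, by omega⟩ with hi'
        have hgen : (MonoidAlgebra.mapDomainAlgHom Kq Kq (inclSB (n + 1) (Nat.le_succ n)))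
            (MonoidAlgebra.of Kq (SB n) (sG i)) = MonoidAlgebra.of Kq (SB (n + 1)) (sG i') := by
          rw [MonoidAlgebra.of_apply, MonoidAlgebra.mapDomainAlgHom_apply,
            MonoidAlgebra.mapDomain_single, inclSB_sG, MonoidAlgebra.of_apply]
        have hrel : HeckeRel (n + 1) (MonoidAlgebra.of Kq (SB (n + 1)) (sG i') ^ 2)
            ((qK - 1) • MonoidAlgebra.of Kq (SB (n + 1)) (sG i') + qK • 1) := ⟨i', rfl, rfl⟩
        have hmk := RingQuot.mkAlgHom_rel Kq hrel
        simp only [map_pow, map_add, map_smul, map_one] at hmk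
        simp only [AlgHom.coe_comp, Function.comp_apply, map_pow, map_add, map_smul, map_one,
          hgen]
        exact hmk⟩

/-- The algebra homomorphism `ι_n : H_z(SB_n) → H_z(SB_{n+1})`. -/
def iotaHZ (n : ℕ) : HeckeZ n →ₐ[Lqz] HeckeZ (n + 1) :=
  Algebra.TensorProduct.map (AlgHom.id Lqz Lqz) (heckeIncl n)
/-- The `ℂ(q)`-subspace `H(S_dB_n)` of the singular Hecke algebra spanned by the images of
the singular braids with `d` singular points. -/
def HSd (n d : ℕ) : Submodule Kq (Hecke n) :=
  Submodule.span Kq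
    {x | ∃ β : SB n, degM β = Multiplicative.ofAdd d ∧ x = heckeOf β}

/-- The `ℂ(q,z)`-subspace `H_z(S_dB_n)` of `H_z(SB_n)` spanned by the images of the singular
braids with `d` singular points. -/
def HzSd (n d : ℕ) : Submodule Lqz (HeckeZ n) :=
  Submodule.span Lqz
    {x | ∃ β : SB n, degM β = Multiplicative.ofAdd d ∧ x = ofHZ β}

/-- Strand counts: the positive natural numbers. -/
abbrev Idx : Type := {n : ℕ // 0 < n}

/-- The direct sum `⊕_{n ≥ 1} H_z(SB_n)`. -/
abbrev MV : Type := ⨁ i : Idx, HeckeZ i.1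

instance instAddCommGroupHeckeZ (n : ℕ) : AddCommGroup (HeckeZ n) := inferInstance
instance instModuleHeckeZ (n : ℕ) : Module Lqz (HeckeZ n) := inferInstance
instance instAddCommGroupMV : AddCommGroup MV := inferInstance
instance instModuleMV : Module Lqz MV := inferInstance

/-- The canonical inclusion of the `n`-th summand of `⊕_{n ≥ 1} H_z(SB_n)`. -/
def mvof (i : Idx) : HeckeZ i.1 →ₗ[Lqz] MV :=
  DirectSum.lof Lqz Idx (fun i => HeckeZ i.1) i

/-- Successor of a strand count. -/
def succI (i : Idx) : Idx := ⟨i.1 + 1, Nat.succ_pos _⟩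

/-- The generator `σ_n` of `SB_{n+1}`. -/
def sigmaLast (i : Idx) : SB (i.1 + 1) := sG ⟨i.1 - 1, Nat.sub_lt i.2 one_pos⟩

/-- The Markov relations in `⊕_{n ≥ 1} H_z(SB_n)`: trace relations, stabilization relations
and positive Markov relations. -/
def markovRels : Set MV :=
  {x | ∃ (i : Idx) (a b : HeckeZ i.1), x = mvof i (a * b) - mvof i (b * a)} ∪
  {x | ∃ (i : Idx) (a : HeckeZ i.1), x = mvof i a - mvof (succI i) (iotaHZ i.1 a)} ∪
  {x | ∃ (i : Idx) (a : HeckeZ i.1),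
    x = mvof (succI i) (iotaHZ i.1 a * ofHZ (sigmaLast i)) - zL • mvof i a}

/-- The Markov module `Markov(⊔SB)`. -/
abbrev Markov : Type := MV ⧸ Submodule.span Lqz markovRels

instance instAddCommGroupMarkov : AddCommGroup Markov := inferInstance
instance instModuleMarkov : Module Lqz Markov := inferInstance

/-- The class `[a, m]` in the Markov module of an element `a ∈ H_z(SB_m)`. -/
def markovClass (m : ℕ) (hm : 0 < m) (a : HeckeZ m) : Markov :=
  Submodule.Quotient.mk (mvof ⟨m, hm⟩ a)

/-- The class `[β, m]` in the Markov module of a singular braid `β ∈ SB_m`. -/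
def braidClass (m : ℕ) (hm : 0 < m) (β : SB m) : Markov :=
  markovClass m hm (ofHZ β)

/-- The direct sum `⊕_{n ≥ 1} H_z(S_dB_n)`. -/
abbrev MVD (d : ℕ) : Type := ⨁ i : Idx, ↥(HzSd i.1 d)

instance instAddCommGroupMVD (d : ℕ) : AddCommGroup (MVD d) := inferInstance
instance instModuleMVD (d : ℕ) : Module Lqz (MVD d) := inferInstance

/-- The canonical inclusion of the `n`-th summand of `⊕_{n ≥ 1} H_z(S_dB_n)`. -/
def mvdof (d : ℕ) (i : Idx) : ↥(HzSd i.1 d) →ₗ[Lqz] MVD d :=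
  DirectSum.lof Lqz Idx (fun i => ↥(HzSd i.1 d)) i

/-- The Markov relations in `⊕_{n ≥ 1} H_z(S_dB_n)`. -/
def markovRelsD (d : ℕ) : Set (MVD d) :=
  {x | ∃ (i : Idx) (k l : ℕ), k + l = d ∧ ∃ (a b : HeckeZ i.1),
    a ∈ HzSd i.1 k ∧ b ∈ HzSd i.1 l ∧
    ∃ (hab : a * b ∈ HzSd i.1 d) (hba : b * a ∈ HzSd i.1 d),
      x = mvdof d i ⟨a * b, hab⟩ - mvdof d i ⟨b * a, hba⟩} ∪
  {x | ∃ (i : Idx) (a : HeckeZ i.1) (ha : a ∈ HzSd i.1 d)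
      (ha' : iotaHZ i.1 a ∈ HzSd (i.1 + 1) d),
    x = mvdof d i ⟨a, ha⟩ - mvdof d (succI i) ⟨iotaHZ i.1 a, ha'⟩} ∪
  {x | ∃ (i : Idx) (a : HeckeZ i.1) (ha : a ∈ HzSd i.1 d)
      (ha' : iotaHZ i.1 a * ofHZ (sigmaLast i) ∈ HzSd (i.1 + 1) d),
    x = mvdof d (succI i) ⟨iotaHZ i.1 a * ofHZ (sigmaLast i), ha'⟩ - zL • mvdof d i ⟨a, ha⟩}

/-- The `d`-th Markov module `Markov(⊔S_dB)`. -/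
abbrev MarkovD (d : ℕ) : Type := MVD d ⧸ Submodule.span Lqz (markovRelsD d)

instance instAddCommGroupMarkovD (d : ℕ) : AddCommGroup (MarkovD d) := inferInstance
instance instModuleMarkovD (d : ℕ) : Module Lqz (MarkovD d) := inferInstance

/-- The class `[β, m]` in the `d`-th Markov module of a singular braid `β ∈ S_dB_m`
(defined to be `0` if `β` does not have exactly `d` singular points). -/
def classD (d m : ℕ) (hm : 0 < m) (β : SB m) : MarkovD d :=
  if h : degM β = Multiplicative.ofAdd d then
    Submodule.Quotient.mk (mvdof d ⟨m, hm⟩ ⟨ofHZ β, Submodule.subset_span ⟨β, h, rfl⟩⟩)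
  else 0
/-- The singular braid `W_{d,k} = τ_1 τ_3 ⋯ τ_{2k-1} (τ_{2k+1}σ_{2k+1}) ⋯ (τ_{2d-1}σ_{2d-1})`
in `SB_{2d}` (for `1 ≤ d` and `k ≤ d`). -/
def W (d k : ℕ) : SB (2 * d) :=
  ((List.range d).map (fun j =>
    if h : 2 * j < 2 * d - 1 then
      (if j < k then tauG ⟨2 * j, h⟩ else tauG ⟨2 * j, h⟩ * sG ⟨2 * j, h⟩)
    else 1)).prod

/-- The class of `W_{d,k}` in the `d`-th Markov module: `[W_{d,k}, 2d]` for `d ≥ 1`, and the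
class `[W_{0,0}, 1]` of the trivial braid on one strand for `d = 0`. -/
def WclassD (d k : ℕ) : MarkovD d :=
  if hd : d = 0 then hd ▸ classD 0 1 one_pos 1
  else classD d (2 * d) (by omega) (W d k)

/-- The singular braid `α_0 τ_{i_1} α_1 τ_{i_2} ⋯ τ_{i_d} α_d`. -/
def sbWord {m d : ℕ} (α : Fin (d + 1) → SB m) (idx : Fin d → Fin (m - 1)) : SB m :=
  α 0 * ((List.ofFn fun j : Fin d => tauG (idx j) * α j.succ).prod)

/-- The singular braid `α_0 τ_{i_1} α_1 ⋯ τ_{i_{k-1}} α_{k-1} x α_k τ_{i_{k+1}} ⋯ τ_{i_d} α_d`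
obtained from `α_0 τ_{i_1} α_1 ⋯ τ_{i_d} α_d` by replacing the letter `τ_{i_k}` by `x`. -/
def sbWordRepl {m d : ℕ} (α : Fin (d + 1) → SB m) (idx : Fin d → Fin (m - 1))
    (k : Fin d) (x : SB m) : SB m :=
  α 0 * ((List.ofFn fun j : Fin d => (if j = k then x else tauG (idx j)) * α j.succ).prod)

/-- `RepGen false i = 1` (deleting a `τ` letter) and `RepGen true i = σ_{i+1}` (replacing a
`τ` letter by the corresponding `σ` letter). -/
def RepGen {m : ℕ} (ε : Bool) (i : Fin (m - 1)) : SB m := if ε then sG i else 1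

/-- `IsG d ε g` says that the linear map `g : Markov(⊔S_dB) → Markov(⊔S_{d-1}B)` is induced
by the family of maps `f_{n,ε}` (deletion of one `τ` letter for `ε = false`, replacement of one
`τ` letter by the corresponding `σ` letter for `ε = true`), i.e. that
`g([β,n]) = [f_{n,ε}(β), n]` for every singular braid `β ∈ S_dB_n`. -/
def IsG (d : ℕ) (ε : Bool) (g : MarkovD d →ₗ[Lqz] MarkovD (d - 1)) : Prop :=
  ∀ (m : ℕ) (hm : 0 < m) (α : Fin (d + 1) → SB m) (idx : Fin d → Fin (m - 1)),
    (∀ j, degM (α j) = Multiplicative.ofAdd 0) →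
    g (classD d m hm (sbWord α idx)) =
      ∑ k : Fin d, classD (d - 1) m hm (sbWordRepl α idx k (RepGen ε (idx k)))

/-- The `ℂ(q,z)`-vector space freely spanned by the set `S_dB_m` of singular braids on `m`
strands with `d` singular points. -/
abbrev FreeSd (m d : ℕ) : Type :=
  {β : SB m // degM β = Multiplicative.ofAdd d} →₀ Lqz

/-- The basis element of `ℂ(q,z)[S_dB_m]` corresponding to a braid `β ∈ S_dB_m` (defined to
be `0` if `β` does not have exactly `d` singular points). -/
def freeElem {m : ℕ} (d : ℕ) (β : SB m) : FreeSd m d :=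
  if h : degM β = Multiplicative.ofAdd d then Finsupp.single ⟨β, h⟩ 1 else 0

/-- Iterated product (power) with respect to a given bilinear multiplication. -/
def powAux (mul : Markov →ₗ[Lqz] Markov →ₗ[Lqz] Markov) (one x : Markov) : ℕ → Markov
  | 0 => one
  | k + 1 => mul x (powAux mul one x k)

/-! The braid `δ` lets the `n` strands of `α` cross over the `m` strands of `β`: it is the
product `A_{n-1} ⋯ A_1 A_0` of the rows `A_r = σ_{r+1} σ_{r+2} ⋯ σ_{r+m}`, each carrying one strand
of `α` across all strands of `β`. A row shifts every generator lying strictly inside it up by one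
(by the braid relations `σ_k σ_{k+1} g_k = g_{k+1} σ_k σ_{k+1}`, valid for `g = σ, σ⁻¹, τ`) and
commutes with generators far from it. Hence `δ` shifts the generators of `β` up by `n`, while a
generator of `α` is moved down by `m` by the two consecutive rows it meets. -/

section Generators

variable {N : ℕ}

theorem SB.semiconjBy_map_of_mk_of {a : ℕ} {M : Type*} [Monoid M] (f g : SB a →* M) (d : M)
    (h : ∀ x : SBGen a, SemiconjBy d (f (SB.mk (.of x))) (g (SB.mk (.of x)))) (α : SB a) :
    SemiconjBy d (f α) (g α) := by
  obtain ⟨w, rfl⟩ := Con.mk'_surjective α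
  induction w using FreeMonoid.inductionOn' with
  | one => simp only [map_one]; exact SemiconjBy.one_right d
  | of_mul x w ih =>
    change SemiconjBy d (f (SB.mk (.of x * w))) (g (SB.mk (.of x * w)))
    simp only [map_mul]
    exact (h x).mul_right ih

theorem SB.mk_of_mul_of_eq_one {x y : SBGen N} (h : SBRel N (.of x * .of y) 1) :
    SB.mk (.of x) * SB.mk (.of y) = 1 := by
  simpa only [map_mul, map_one] using SB.sound h

theorem SB.mk_of_mul_of_eq {x y u v : SBGen N} (h : SBRel N (.of x * .of y) (.of u * .of v)) :
    SB.mk (.of x) * SB.mk (.of y) = SB.mk (.of u) * SB.mk (.of v) := by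
  simpa only [map_mul] using SB.sound h

theorem SB.semiconjBy_mk_of {x y z w : SBGen N}
    (h : SBRel N (.of x * .of y * .of z) (.of w * .of x * .of y)) :
    SemiconjBy (SB.mk (.of x) * SB.mk (.of y)) (SB.mk (.of z)) (SB.mk (.of w)) := by
  have hmk := SB.sound h
  rwa [map_mul, map_mul, map_mul, map_mul, mul_assoc (SB.mk (.of w))] at hmk

theorem sG_mul_sInvG (i : Fin (N - 1)) : sG i * sInvG i = 1 :=
  SB.mk_of_mul_of_eq_one (.inv_right i)

theorem sInvG_mul_sG (i : Fin (N - 1)) : sInvG i * sG i = 1 :=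
  SB.mk_of_mul_of_eq_one (.inv_left i)

/-- `sG i` as a unit; its inverse is definitionally `sInvG i`. -/
def sigmaUnit (i : Fin (N - 1)) : (SB N)ˣ := ⟨sG i, sInvG i, sG_mul_sInvG i, sInvG_mul_sG i⟩

inductive GenKind : Type
  | sigma | sigmaInv | tau

def GenKind.letter : GenKind → Fin (N - 1) → SBGen N
  | .sigma, i => .pos i
  | .sigmaInv, i => .neg i
  | .tau, i => .tau i

def SBGen.kind {a : ℕ} : SBGen a → GenKind
  | .pos _ => .sigma
  | .neg _ => .sigmaInv
  | .tau _ => .tau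

def SBGen.index {a : ℕ} : SBGen a → ℕ
  | .pos i | .neg i | .tau i => i

theorem SBGen.index_lt {a : ℕ} (x : SBGen a) : x.index < a - 1 := by
  cases x <;> exact Fin.is_lt _

theorem commute_sG_letter (t : GenKind) (i j : Fin (N - 1))
    (h : (i : ℕ) + 2 ≤ j ∨ (j : ℕ) + 2 ≤ i) : Commute (sG i) (SB.mk (.of (t.letter j))) := by
  have hss : Commute (sG i) (sG j) := SB.mk_of_mul_of_eq (.comm_ss i j h)
  cases t with
  | sigma => exact hss
  | sigmaInv => exact hss.units_inv_right (u := sigmaUnit j)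
  | tau => exact SB.mk_of_mul_of_eq (.comm_st i j h)

theorem commute_letter (t u : GenKind) (i j : Fin (N - 1))
    (h : (i : ℕ) + 2 ≤ j ∨ (j : ℕ) + 2 ≤ i) :
    Commute (SB.mk (.of (t.letter i))) (SB.mk (.of (u.letter j))) := by
  cases t with
  | sigma => exact commute_sG_letter u i j h
  | sigmaInv => exact (commute_sG_letter u i j h).units_inv_left (u := sigmaUnit i)
  | tau =>
    cases u with
    | sigma => exact (commute_sG_letter .tau j i h.symm).symm
    | sigmaInv =>
      exact ((commute_sG_letter .tau j i h.symm).units_inv_left (u := sigmaUnit j)).symm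
    | tau => exact SB.mk_of_mul_of_eq (.comm_tt i j h)

theorem semiconjBy_letter (t : GenKind) (i j : Fin (N - 1))
    (h : (i : ℕ) + 1 = j ∨ (j : ℕ) + 1 = i) :
    SemiconjBy (sG i * sG j) (SB.mk (.of (t.letter i))) (SB.mk (.of (t.letter j))) := by
  have hsss : SemiconjBy (sG i * sG j) (sG i) (sG j) := SB.semiconjBy_mk_of (.braid i j h)
  cases t with
  | sigma => exact hsss
  | sigmaInv => exact hsss.units_inv_right (x := sigmaUnit i) (y := sigmaUnit j)
  | tau => exact SB.semiconjBy_mk_of (.braid_tau i j h)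

/-- The generator of kind `t` with `0`-based index `i`, or `1` when `i` is out of range. -/
def gen (N : ℕ) (t : GenKind) (i : ℕ) : SB N :=
  if h : i < N - 1 then SB.mk (.of (t.letter ⟨i, h⟩)) else 1

theorem shiftHom_mk_of {a : ℕ} (k : ℕ) (h : k + a ≤ N) (x : SBGen a) :
    shiftHom N k h (SB.mk (.of x)) = gen N x.kind (k + x.index) := by
  have hx : k + x.index < N - 1 := by have := x.index_lt; omega
  rw [gen, dif_pos hx, shiftHom_mk, FreeMonoid.map_of]
  cases x <;> rfl

theorem inclSB_mk_of {a : ℕ} (h : a ≤ N) (x : SBGen a) :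
    inclSB N h (SB.mk (.of x)) = gen N x.kind x.index := by
  rw [inclSB, shiftHom_mk_of, zero_add]

theorem commute_gen (t u : GenKind) {i j : ℕ} (h : i + 2 ≤ j ∨ j + 2 ≤ i) :
    Commute (gen N t i) (gen N u j) := by
  by_cases hi : i < N - 1
  · by_cases hj : j < N - 1
    · simp only [gen, dif_pos hi, dif_pos hj]
      exact commute_letter t u _ _ h
    · simp only [gen, dif_neg hj]; exact Commute.one_right _
  · simp only [gen, dif_neg hi]; exact Commute.one_left _

theorem semiconjBy_gen (t : GenKind) {i j : ℕ} (h : i + 1 = j ∨ j + 1 = i)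
    (hi : i < N - 1) (hj : j < N - 1) :
    SemiconjBy (gen N .sigma i * gen N .sigma j) (gen N t i) (gen N t j) := by
  simp only [gen, dif_pos hi, dif_pos hj]
  exact semiconjBy_letter t _ _ h

def braidSubmonoid (N : ℕ) : Submonoid (SB N) :=
  Submonoid.closure {x | ∃ i, x = sG i ∨ x = sInvG i}

theorem braidSubmonoid_le_isUnit : braidSubmonoid N ≤ IsUnit.submonoid (SB N) := by
  refine Submonoid.closure_le.2 ?_
  rintro _ ⟨i, rfl | rfl⟩
  · exact (sigmaUnit i).isUnit
  · exact (sigmaUnit i)⁻¹.isUnit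

theorem gen_sigma_mem_braidSubmonoid (i : ℕ) : gen N .sigma i ∈ braidSubmonoid N := by
  unfold gen
  split_ifs with hi
  · exact Submonoid.subset_closure ⟨⟨i, hi⟩, Or.inl rfl⟩
  · exact one_mem _

end Generators

section Crossing

variable {N : ℕ}

/-- The row `σ_{p+1} σ_{p+2} ⋯ σ_{p+len}` (generators with `0`-based indices `p, …, p+len-1`). -/
def row (N p len : ℕ) : SB N :=
  ((List.range len).map fun s => gen N .sigma (p + s)).prod

theorem row_zero (p : ℕ) : row N p 0 = 1 := rfl

theorem row_succ (p len : ℕ) : row N p (len + 1) = row N p len * gen N .sigma (p + len) := by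
  simp only [row, List.range_succ, List.map_append, List.prod_append, List.map_cons,
    List.map_nil, List.prod_cons, List.prod_nil, mul_one]

theorem row_add (p a b : ℕ) : row N p (a + b) = row N p a * row N (p + a) b := by
  induction b with
  | zero => rw [row_zero, mul_one, add_zero]
  | succ b ih => rw [← add_assoc, row_succ, ih, row_succ, mul_assoc, add_assoc]

theorem row_two (p : ℕ) : row N p 2 = gen N .sigma p * gen N .sigma (p + 1) := by
  rw [row_succ, row_succ, row_zero, one_mul, add_zero]

theorem row_mem_braidSubmonoid (p len : ℕ) : row N p len ∈ braidSubmonoid N :=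
  Submonoid.list_prod_mem _ fun _ hx => by
    obtain ⟨s, -, rfl⟩ := List.mem_map.1 hx
    exact gen_sigma_mem_braidSubmonoid _

theorem commute_gen_row (t : GenKind) {i p len : ℕ} (h : i + 2 ≤ p ∨ p + len + 1 ≤ i) :
    Commute (gen N t i) (row N p len) :=
  Commute.list_prod_right _ _ fun _ hx => by
    obtain ⟨s, hs, rfl⟩ := List.mem_map.1 hx
    have := List.mem_range.1 hs
    exact commute_gen t .sigma (by omega)

theorem semiconjBy_row_gen (t : GenKind) {p k len : ℕ} (hp : p ≤ k) (hk : k + 2 ≤ p + len)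
    (hN : k + 1 < N - 1) : SemiconjBy (row N p len) (gen N t k) (gen N t (k + 1)) := by
  obtain ⟨a, rfl⟩ : ∃ a, k = p + a := ⟨k - p, by omega⟩
  obtain ⟨b, rfl⟩ : ∃ b, len = a + (2 + b) := ⟨len - a - 2, by omega⟩
  have hP : Commute (row N p a) (gen N t (p + a + 1)) :=
    (commute_gen_row t (Or.inr (by omega))).symm
  have hS : SemiconjBy (row N (p + a) 2) (gen N t (p + a)) (gen N t (p + a + 1)) := by
    rw [row_two]; exact semiconjBy_gen t (Or.inl rfl) (by omega) hN
  have hQ : Commute (row N (p + a + 2) b) (gen N t (p + a)) :=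
    (commute_gen_row t (Or.inl le_rfl)).symm
  rw [row_add, row_add]
  exact SemiconjBy.mul_left hP (hS.mul_left hQ)

theorem semiconjBy_row_mul_row_gen (t : GenKind) {k len : ℕ} (h : k + len < N - 1) :
    SemiconjBy (row N (k + 1) len * row N k len) (gen N t (k + len)) (gen N t k) := by
  induction len with
  | zero => simp only [row_zero, mul_one, add_zero]; exact SemiconjBy.one_left _
  | succ l ih =>
    have hc : Commute (gen N .sigma (k + 1 + l)) (row N k l) :=
      commute_gen_row .sigma (Or.inr (by omega))
    rw [row_succ, row_succ, mul_assoc, hc.left_comm, ← mul_assoc, add_right_comm]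
    exact (ih (by omega)).mul_left
      (semiconjBy_gen t (Or.inr rfl) (by omega) (by omega))

/-- `crossing N m n` is the braid `δ = A_{n-1} ⋯ A_0`. -/
def crossing (N m : ℕ) : ℕ → SB N
  | 0 => 1
  | r + 1 => row N r m * crossing N m r

theorem crossing_mem_braidSubmonoid (m r : ℕ) : crossing N m r ∈ braidSubmonoid N := by
  induction r with
  | zero => exact one_mem _
  | succ r ih => exact mul_mem (row_mem_braidSubmonoid r m) ih

theorem commute_gen_crossing (t : GenKind) {m i r : ℕ} (h : r + m ≤ i) :
    Commute (gen N t i) (crossing N m r) := by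
  induction r with
  | zero => exact Commute.one_right _
  | succ r ih => exact (commute_gen_row t (Or.inr (by omega))).mul_right (ih (by omega))

theorem semiconjBy_crossing_gen_add (t : GenKind) {m j r : ℕ} (hj : j + 2 ≤ m)
    (hN : j + r + 2 ≤ N) : SemiconjBy (crossing N m r) (gen N t j) (gen N t (j + r)) := by
  induction r with
  | zero => exact SemiconjBy.one_left _
  | succ r ih =>
    rw [crossing, ← add_assoc]
    exact (semiconjBy_row_gen (k := j + r) t (by omega) (by omega) (by omega)).mul_left
      (ih (by omega))

theorem semiconjBy_crossing_gen_sub (t : GenKind) {m k r : ℕ} (hk : k + 2 ≤ r)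
    (hN : m + k + 1 < N) : SemiconjBy (crossing N m r) (gen N t (m + k)) (gen N t k) := by
  induction r, hk using Nat.le_induction with
  | base =>
    rw [crossing, crossing, ← mul_assoc, add_comm m k]
    exact (semiconjBy_row_mul_row_gen t (by omega)).mul_left
      (commute_gen_crossing t le_rfl).symm
  | succ r hr ih =>
    exact SemiconjBy.mul_left (commute_gen_row t (Or.inl hr)).symm ih

end Crossing

theorem commute_inclSB_shiftHom {n m N : ℕ} (hn : n ≤ N) (h : n + m ≤ N) (α : SB n)
    (β : SB m) : Commute (inclSB N hn α) (shiftHom N n h β) := by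
  refine SB.semiconjBy_map_of_mk_of _ _ _ (fun y => ?_) β
  refine (SB.semiconjBy_map_of_mk_of _ _ _ (fun x => ?_) α).symm
  rw [inclSB_mk_of, shiftHom_mk_of]
  have := x.index_lt
  have := y.index_lt
  exact commute_gen _ _ (Or.inr (by omega))

theorem semiconjBy_crossing_inclSB {n m N : ℕ} (hm : m ≤ N) (h : n + m ≤ N) (β : SB m) :
    SemiconjBy (crossing N m n) (inclSB N hm β) (shiftHom N n h β) := by
  refine SB.semiconjBy_map_of_mk_of _ _ _ (fun y => ?_) β
  have := y.index_lt
  rw [inclSB_mk_of, shiftHom_mk_of, add_comm n y.index]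
  exact semiconjBy_crossing_gen_add _ (by omega) (by omega)

theorem semiconjBy_crossing_shiftHom {n m N : ℕ} (h : m + n ≤ N) (hn : n ≤ N) (α : SB n) :
    SemiconjBy (crossing N m n) (shiftHom N m h α) (inclSB N hn α) := by
  refine SB.semiconjBy_map_of_mk_of _ _ _ (fun x => ?_) α
  have := x.index_lt
  rw [inclSB_mk_of, shiftHom_mk_of]
  exact semiconjBy_crossing_gen_sub _ (by omega) (by omega)

/-- For all `n, m ≥ 1` there exists an invertible element `δ` of the monoid `SB_{n+m}`, a
product of the generators `σ_k^{±1}` only, such that `δ·(β ∗ α) = (α ∗ β)·δ` for all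
`α ∈ SB_n` and `β ∈ SB_m`. -/
theorem exists_conjugating_braid (n m : ℕ) :
    ∃ δ : SB (n + m), IsUnit δ ∧
      δ ∈ Submonoid.closure {x : SB (n + m) | ∃ i, x = sG i ∨ x = sInvG i} ∧
      ∀ (α : SB n) (β : SB m),
        δ * starIn (n + m) (by omega) β α = starIn (n + m) le_rfl α β * δ := by
  refine ⟨crossing (n + m) m n, braidSubmonoid_le_isUnit (crossing_mem_braidSubmonoid m n),
    crossing_mem_braidSubmonoid m n, fun α β => ?_⟩
  have hconj := (semiconjBy_crossing_inclSB (by omega) le_rfl β).mul_right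
    (semiconjBy_crossing_shiftHom (by omega) (by omega) α)
  rwa [← (commute_inclSB_shiftHom _ _ α β).eq] at hconj

end
end SingularHOMFLYPT
end

section
/- For each d ≥ 0, the inclusions H_z(S_dB_n) ⊆ H_z(SB_n) induce a well-defined ℂ(q,z)-linear map j_d : Markov(⊔S_dB) → Markov(⊔SB), and the resulting map ⊕_{d≥0} Markov(⊔S_dB) → Markov(⊔SB) is an isomorphism of ℂ(q,z)-vector spaces; that is, Markov(⊔SB) = ⊕_{d≥0} Markov(⊔S_dB). -/
open scoped TensorProduct DirectSum

set_option synthInstance.maxHeartbeats 1000000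
set_option maxHeartbeats 2000000

namespace SingularHOMFLYPT

noncomputable section

/-!
Every defining relation of `SB_n`, and the Hecke relation `σ_k² = (q-1)σ_k + q`, is homogeneous in
the number of `τ`-letters, so `β ↦ t^{deg β} β` extends to an algebra map
`H_z(SB_n) → H_z(SB_n)[t]`, and its coefficients split `H_z(SB_n)` as the internal direct sum of
the `H_z(S_dB_n)`. Evaluated on braids, each Markov relation relates two elements of one degree `d`,
and is then a relation of `Markov(⊔S_dB)`. Hence taking homogeneous components descends to a map
`Markov(⊔SB) → ⊕_d Markov(⊔S_dB)`, and this map is inverse to `⊕_d j_d`.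
-/

theorem SB.hom_ext {n : ℕ} {M : Type*} [Monoid M] {f g : SB n →* M}
    (h : ∀ x : SBGen n, f (SB.mk (.of x)) = g (SB.mk (.of x))) : f = g := by
  have h1 : f.comp SB.mk = g.comp SB.mk := FreeMonoid.hom_eq h
  refine MonoidHom.ext fun β => ?_
  obtain ⟨w, rfl⟩ := Con.mk'_surjective β
  exact DFunLike.congr_fun h1 w

theorem degM_sG {n : ℕ} (i : Fin (n - 1)) : degM (sG i) = 1 := rfl

theorem degM_inclSB {n N : ℕ} (h : n ≤ N) (β : SB n) : degM (inclSB N h β) = degM β := by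
  have : degM.comp (inclSB N h) = degM := SB.hom_ext fun x => by cases x <;> rfl
  exact DFunLike.congr_fun this β

def ofHZHom (n : ℕ) : SB n →* HeckeZ n :=
  (Algebra.TensorProduct.includeRight.comp (RingQuot.mkAlgHom Kq (HeckeRel n))).toMonoidHom.comp
    (MonoidAlgebra.of Kq (SB n))

theorem ofHZHom_apply {n : ℕ} (β : SB n) : ofHZHom n β = ofHZ β := rfl

theorem ofHZ_one {n : ℕ} : ofHZ (1 : SB n) = 1 := map_one (ofHZHom n)

theorem ofHZ_mul {n : ℕ} (a b : SB n) : ofHZ (a * b) = ofHZ a * ofHZ b := map_mul (ofHZHom n) a b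

theorem ofHZ_mem_HzSd {n d : ℕ} {β : SB n} (h : degM β = Multiplicative.ofAdd d) :
    ofHZ β ∈ HzSd n d :=
  Submodule.subset_span ⟨β, h, rfl⟩

theorem ofHZ_mem_HzSd_degM {n : ℕ} (β : SB n) :
    ofHZ β ∈ HzSd n (Multiplicative.toAdd (degM β)) :=
  ofHZ_mem_HzSd rfl

theorem span_heckeOf_eq_top (n : ℕ) :
    Submodule.span Kq (Set.range (heckeOf (n := n))) = ⊤ := by
  have hof : Submodule.span Kq (Set.range (MonoidAlgebra.of Kq (SB n))) = ⊤ :=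
    Submodule.eq_top_iff'.2 fun f =>
      Submodule.span_mono (Set.image_subset_range _ _) (MonoidAlgebra.mem_span_support_coeff f)
  have hcomp :
      heckeOf (n := n) = RingQuot.mkAlgHom Kq (HeckeRel n) ∘ MonoidAlgebra.of Kq (SB n) := rfl
  rw [hcomp, Set.range_comp, ← AlgHom.coe_toLinearMap, Submodule.span_image, hof,
    Submodule.map_top, LinearMap.range_eq_top]
  exact RingQuot.mkAlgHom_surjective Kq (HeckeRel n)

theorem span_ofHZ_eq_top (n : ℕ) : Submodule.span Lqz (Set.range (ofHZ (n := n))) = ⊤ := by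
  rw [← Submodule.baseChange_top, ← span_heckeOf_eq_top, Submodule.baseChange_span,
    ← Set.range_comp]
  rfl

theorem HeckeZ.linearMap_ext {n : ℕ} {M : Type*} [AddCommGroup M] [Module Lqz M]
    {f g : HeckeZ n →ₗ[Lqz] M} (h : ∀ β : SB n, f (ofHZ β) = g (ofHZ β)) : f = g :=
  LinearMap.ext_on_range (span_ofHZ_eq_top n) h

theorem heckeIncl_heckeOf {n : ℕ} (β : SB n) :
    heckeIncl n (heckeOf β) = heckeOf (inclSB (n + 1) (Nat.le_succ n) β) := by
  rw [heckeIncl, heckeOf, RingQuot.liftAlgHom_mkAlgHom_apply]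
  simp [MonoidAlgebra.of_apply, heckeOf]

theorem iotaHZ_ofHZ {n : ℕ} (β : SB n) :
    iotaHZ n (ofHZ β) = ofHZ (inclSB (n + 1) (Nat.le_succ n) β) := by
  simp [iotaHZ, ofHZ, heckeIncl_heckeOf]

theorem ofHZ_sG_sq {n : ℕ} (i : Fin (n - 1)) :
    ofHZ (sG i) ^ 2 = (qK - 1) • ofHZ (sG i) + qK • (1 : HeckeZ n) := by
  have h := RingQuot.mkAlgHom_rel Kq (show HeckeRel n _ _ from ⟨i, rfl, rfl⟩)
  simp only [map_pow, map_add, map_smul, map_one] at h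
  have h' := congr(Algebra.TensorProduct.includeRight (R := Kq) (A := Lqz) $h)
  simp only [map_pow, map_add, map_smul, map_one] at h'
  exact h'

def degreeMonomial (n : ℕ) : SB n →* AddMonoidAlgebra (HeckeZ n) ℕ where
  toFun β := AddMonoidAlgebra.single (Multiplicative.toAdd (degM β)) (ofHZ β)
  map_one' := by simp [ofHZ_one, AddMonoidAlgebra.one_def]
  map_mul' a b := by simp [ofHZ_mul, AddMonoidAlgebra.single_mul_single]

def gradingHecke (n : ℕ) : Hecke n →ₐ[Kq] AddMonoidAlgebra (HeckeZ n) ℕ :=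
  RingQuot.liftAlgHom Kq ⟨MonoidAlgebra.lift Kq _ (SB n) (degreeMonomial n), by
    rintro _ _ ⟨i, rfl, rfl⟩
    have hσ : ofHZ (sG i ^ 2) = (qK - 1) • ofHZ (sG i) + qK • (1 : HeckeZ n) := by
      rw [← ofHZ_sG_sq, ← ofHZHom_apply, map_pow]; rfl
    simp [degreeMonomial, degM_sG, AddMonoidAlgebra.one_def, AddMonoidAlgebra.smul_single, hσ,
      sub_smul, AddMonoidAlgebra.single_add]⟩

def grading (n : ℕ) : HeckeZ n →ₐ[Lqz] AddMonoidAlgebra (HeckeZ n) ℕ :=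
  Algebra.TensorProduct.lift (Algebra.ofId Lqz _) (gradingHecke n) fun a _ => Algebra.commutes a _

theorem grading_ofHZ {n : ℕ} (β : SB n) :
    grading n (ofHZ β) = AddMonoidAlgebra.single (Multiplicative.toAdd (degM β)) (ofHZ β) := by
  simp [grading, gradingHecke, ofHZ, heckeOf, degreeMonomial]

theorem grading_of_mem {n d : ℕ} {x : HeckeZ n} (hx : x ∈ HzSd n d) :
    grading n x = AddMonoidAlgebra.single d x := by
  induction hx using Submodule.span_induction with
  | mem x hx =>
    obtain ⟨β, hβ, rfl⟩ := hx
    rw [grading_ofHZ, hβ, toAdd_ofAdd]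
  | zero => simp
  | add x y _ _ hx hy => simp [hx, hy]
  | smul c x _ hx => simp [hx]

theorem isInternal_HzSd (n : ℕ) : DirectSum.IsInternal (HzSd n) := by
  constructor
  · have hgrade : ∀ y : ⨁ d, HzSd n d,
        (grading n (DirectSum.coeAddMonoidHom (HzSd n) y)).toDirectSum =
          DirectSum.lmap (fun d => (HzSd n d).subtype) y := by
      intro y
      induction y using DirectSum.induction_on with
      | zero => simp
      | of d x => simp [grading_of_mem x.2]
      | add y y' hy hy' => simp [hy, hy']
    intro y y' h
    refine (DirectSum.lmap_injective _).2 (fun d => (HzSd n d).injective_subtype) ?_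
    rw [← hgrade, ← hgrade, h]
  · intro x
    have hx : x ∈ LinearMap.range (DirectSum.coeLinearMap (HzSd n)) := by
      refine (span_ofHZ_eq_top n).ge.trans (Submodule.span_le.2 ?_) trivial
      rintro _ ⟨β, rfl⟩
      exact ⟨_, DirectSum.coeLinearMap_of _ _ ⟨ofHZ β, ofHZ_mem_HzSd_degM β⟩⟩
    obtain ⟨y, rfl⟩ := hx
    exact ⟨y, rfl⟩

instance (n : ℕ) : DirectSum.Decomposition (HzSd n) := (isInternal_HzSd n).chooseDecomposition

def gradedClass (i : Idx) : HeckeZ i.1 →ₗ[Lqz] ⨁ d, MarkovD d :=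
  DirectSum.lmap (fun d => (Submodule.mkQ _) ∘ₗ mvdof d i) ∘ₗ
    (DirectSum.decomposeLinearEquiv (HzSd i.1)).toLinearMap

theorem gradedClass_of_mem {i : Idx} {d : ℕ} {x : HeckeZ i.1} (hx : x ∈ HzSd i.1 d) :
    gradedClass i x =
      DirectSum.lof Lqz ℕ MarkovD d (Submodule.Quotient.mk (mvdof d i ⟨x, hx⟩)) := by
  simp [gradedClass, DirectSum.decomposeLinearEquiv_apply, DirectSum.decompose_of_mem _ hx,
    DirectSum.lof_eq_of]

theorem markovD_mk_eq {d : ℕ} {X Y : MVD d} (h : X - Y ∈ markovRelsD d) :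
    (Submodule.Quotient.mk X : MarkovD d) = Submodule.Quotient.mk Y :=
  (Submodule.Quotient.eq _).2 (Submodule.subset_span h)

theorem gradedClass_mul_comm (i : Idx) (a b : HeckeZ i.1) :
    gradedClass i (a * b) = gradedClass i (b * a) := by
  suffices h : (LinearMap.mul Lqz (HeckeZ i.1)).compr₂ (gradedClass i) =
      (LinearMap.mul Lqz (HeckeZ i.1)).flip.compr₂ (gradedClass i) from
    LinearMap.congr_fun₂ h a b
  refine HeckeZ.linearMap_ext fun β => HeckeZ.linearMap_ext fun γ => ?_
  obtain ⟨k, hβ⟩ : ∃ k, degM β = .ofAdd k := ⟨_, rfl⟩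
  obtain ⟨l, hγ⟩ : ∃ l, degM γ = .ofAdd l := ⟨_, rfl⟩
  have hβγ : ofHZ β * ofHZ γ ∈ HzSd i.1 (k + l) := by
    rw [← ofHZ_mul]; exact ofHZ_mem_HzSd (by rw [map_mul, hβ, hγ]; rfl)
  have hγβ : ofHZ γ * ofHZ β ∈ HzSd i.1 (k + l) := by
    rw [← ofHZ_mul, add_comm]; exact ofHZ_mem_HzSd (by rw [map_mul, hβ, hγ]; rfl)
  simp only [LinearMap.compr₂_apply, LinearMap.mul_apply', LinearMap.flip_apply]
  rw [gradedClass_of_mem hβγ, gradedClass_of_mem hγβ, markovD_mk_eq (Or.inl (Or.inl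
    ⟨i, k, l, rfl, _, _, ofHZ_mem_HzSd hβ, ofHZ_mem_HzSd hγ, hβγ, hγβ, rfl⟩))]

theorem gradedClass_iotaHZ (i : Idx) (a : HeckeZ i.1) :
    gradedClass (succI i) (iotaHZ i.1 a) = gradedClass i a := by
  suffices h : gradedClass (succI i) ∘ₗ (iotaHZ i.1).toLinearMap = gradedClass i from
    LinearMap.congr_fun h a
  refine HeckeZ.linearMap_ext fun β => ?_
  obtain ⟨k, hβ⟩ : ∃ k, degM β = .ofAdd k := ⟨_, rfl⟩
  have hι : iotaHZ i.1 (ofHZ β) ∈ HzSd (i.1 + 1) k := by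
    rw [iotaHZ_ofHZ]; exact ofHZ_mem_HzSd ((degM_inclSB _ β).trans hβ)
  show gradedClass (succI i) (iotaHZ i.1 (ofHZ β)) = gradedClass i (ofHZ β)
  rw [gradedClass_of_mem (i := succI i) hι,
    gradedClass_of_mem (ofHZ_mem_HzSd hβ),
    markovD_mk_eq (Or.inl (Or.inr ⟨i, _, ofHZ_mem_HzSd hβ, hι, rfl⟩))]

theorem gradedClass_markov (i : Idx) (a : HeckeZ i.1) :
    gradedClass (succI i) (iotaHZ i.1 a * ofHZ (sigmaLast i)) = zL • gradedClass i a := by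
  suffices h : gradedClass (succI i) ∘ₗ LinearMap.mulRight Lqz (ofHZ (sigmaLast i)) ∘ₗ
      (iotaHZ i.1).toLinearMap = zL • gradedClass i from
    LinearMap.congr_fun h a
  refine HeckeZ.linearMap_ext fun β => ?_
  obtain ⟨k, hβ⟩ : ∃ k, degM β = .ofAdd k := ⟨_, rfl⟩
  have hσ : iotaHZ i.1 (ofHZ β) * ofHZ (sigmaLast i) ∈ HzSd (i.1 + 1) k := by
    rw [iotaHZ_ofHZ, ← ofHZ_mul]
    exact ofHZ_mem_HzSd (by rw [map_mul, degM_inclSB, hβ, sigmaLast, degM_sG, mul_one])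
  show gradedClass (succI i) (iotaHZ i.1 (ofHZ β) * ofHZ (sigmaLast i)) =
    zL • gradedClass i (ofHZ β)
  rw [gradedClass_of_mem (i := succI i) hσ,
    gradedClass_of_mem (ofHZ_mem_HzSd hβ), ← map_smul, ← Submodule.Quotient.mk_smul,
    markovD_mk_eq (Or.inr ⟨i, _, ofHZ_mem_HzSd hβ, hσ, rfl⟩)]

def MV.toGraded : MV →ₗ[Lqz] ⨁ d, MarkovD d :=
  DirectSum.toModule Lqz Idx _ gradedClass

theorem MV.toGraded_mvof (i : Idx) (a : HeckeZ i.1) : MV.toGraded (mvof i a) = gradedClass i a :=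
  DirectSum.toModule_lof (φ := gradedClass) Lqz i a

theorem span_markovRels_le_ker_toGraded :
    Submodule.span Lqz markovRels ≤ LinearMap.ker MV.toGraded := by
  rw [Submodule.span_le]
  rintro _ ((⟨i, a, b, rfl⟩ | ⟨i, a, rfl⟩) | ⟨i, a, rfl⟩) <;>
    simp only [SetLike.mem_coe, LinearMap.mem_ker, map_sub, map_smul, sub_eq_zero]
  · rw [MV.toGraded_mvof, MV.toGraded_mvof, gradedClass_mul_comm]
  · rw [MV.toGraded_mvof]
    exact ((MV.toGraded_mvof (succI i) _).trans (gradedClass_iotaHZ i a)).symm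
  · rw [MV.toGraded_mvof]
    exact (MV.toGraded_mvof (succI i) _).trans (gradedClass_markov i a)

def Markov.toGraded : Markov →ₗ[Lqz] ⨁ d, MarkovD d :=
  Submodule.liftQ _ MV.toGraded span_markovRels_le_ker_toGraded

theorem Markov.toGraded_mk (i : Idx) (a : HeckeZ i.1) :
    Markov.toGraded (Submodule.Quotient.mk (mvof i a)) = gradedClass i a :=
  MV.toGraded_mvof i a

def MVD.toMarkov (d : ℕ) : MVD d →ₗ[Lqz] Markov :=
  DirectSum.toModule Lqz Idx Markov fun i =>
    Submodule.mkQ _ ∘ₗ mvof i ∘ₗ (HzSd i.1 d).subtype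

theorem MVD.toMarkov_mvdof (d : ℕ) (i : Idx) (x : HzSd i.1 d) :
    MVD.toMarkov d (mvdof d i x) = Submodule.Quotient.mk (mvof i x) := by
  rw [MVD.toMarkov, mvdof, DirectSum.toModule_lof]
  rfl

theorem markov_mk_eq {X Y : MV} (h : X - Y ∈ markovRels) :
    (Submodule.Quotient.mk X : Markov) = Submodule.Quotient.mk Y :=
  (Submodule.Quotient.eq _).2 (Submodule.subset_span h)

theorem span_markovRelsD_le_ker_toMarkov (d : ℕ) :
    Submodule.span Lqz (markovRelsD d) ≤ LinearMap.ker (MVD.toMarkov d) := by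
  rw [Submodule.span_le]
  rintro _ ((⟨i, -, -, -, a, b, -, -, -, -, rfl⟩ | ⟨i, a, -, -, rfl⟩) | ⟨i, a, -, -, rfl⟩) <;>
    simp only [SetLike.mem_coe, LinearMap.mem_ker, map_sub, map_smul, MVD.toMarkov_mvdof,
      sub_eq_zero]
  · exact markov_mk_eq (Or.inl (Or.inl ⟨i, a, b, rfl⟩))
  · exact markov_mk_eq (Or.inl (Or.inr ⟨i, a, rfl⟩))
  · rw [← Submodule.Quotient.mk_smul]
    exact markov_mk_eq (Or.inr ⟨i, a, rfl⟩)

def MarkovD.toMarkov (d : ℕ) : MarkovD d →ₗ[Lqz] Markov :=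
  Submodule.liftQ _ (MVD.toMarkov d) (span_markovRelsD_le_ker_toMarkov d)

theorem MarkovD.toMarkov_mk (d : ℕ) (i : Idx) (x : HzSd i.1 d) :
    MarkovD.toMarkov d (Submodule.Quotient.mk (mvdof d i x)) =
      Submodule.Quotient.mk (mvof i (x : HeckeZ i.1)) :=
  MVD.toMarkov_mvdof d i x

theorem toModule_toMarkov_comp_toGraded :
    DirectSum.toModule Lqz ℕ Markov MarkovD.toMarkov ∘ₗ Markov.toGraded = LinearMap.id := by
  refine Submodule.linearMap_qext _ (DirectSum.linearMap_ext Lqz fun i => ?_)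
  refine HeckeZ.linearMap_ext fun β => ?_
  show DirectSum.toModule Lqz ℕ Markov MarkovD.toMarkov
      (Markov.toGraded (Submodule.Quotient.mk (mvof i (ofHZ β)))) =
    Submodule.Quotient.mk (mvof i (ofHZ β))
  rw [Markov.toGraded_mk, gradedClass_of_mem (ofHZ_mem_HzSd_degM β),
    DirectSum.toModule_lof, MarkovD.toMarkov_mk]

theorem toGraded_comp_toModule_toMarkov :
    Markov.toGraded ∘ₗ DirectSum.toModule Lqz ℕ Markov MarkovD.toMarkov = LinearMap.id := by
  refine DirectSum.linearMap_ext Lqz fun d => Submodule.linearMap_qext _ ?_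
  refine DirectSum.linearMap_ext Lqz fun i => LinearMap.ext fun x => ?_
  show Markov.toGraded (DirectSum.toModule Lqz ℕ Markov MarkovD.toMarkov
      (DirectSum.lof Lqz ℕ MarkovD d (Submodule.Quotient.mk (mvdof d i x)))) =
    DirectSum.lof Lqz ℕ MarkovD d (Submodule.Quotient.mk (mvdof d i x))
  rw [DirectSum.toModule_lof, MarkovD.toMarkov_mk, Markov.toGraded_mk, gradedClass_of_mem x.2]

def markovEquiv : (⨁ d, MarkovD d) ≃ₗ[Lqz] Markov :=
  .ofLinearMap _ _ toModule_toMarkov_comp_toGraded toGraded_comp_toModule_toMarkov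

/-- For each `d ≥ 0` the inclusions `H_z(S_dB_n) ⊆ H_z(SB_n)` induce a well-defined
`ℂ(q,z)`-linear map `j_d : Markov(⊔S_dB) → Markov(⊔SB)`, and the resulting map
`⊕_{d ≥ 0} Markov(⊔S_dB) → Markov(⊔SB)` is an isomorphism of `ℂ(q,z)`-vector spaces. -/
theorem markov_module_graded :
    ∃ j : ∀ d : ℕ, MarkovD d →ₗ[Lqz] Markov,
      (∀ (d : ℕ) (i : Idx) (x : ↥(HzSd i.1 d)),
        j d (Submodule.Quotient.mk (mvdof d i x)) =
          Submodule.Quotient.mk (mvof i (x : HeckeZ i.1))) ∧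
      Function.Bijective (DirectSum.toModule Lqz ℕ Markov j) :=
  ⟨MarkovD.toMarkov, MarkovD.toMarkov_mk, markovEquiv.bijective⟩

end
end SingularHOMFLYPT
end

section
/- For every d ≥ 2, g_1 ∘ g_0 = g_0 ∘ g_1 as ℂ(q,z)-linear maps Markov(⊔S_dB) → Markov(⊔S_{d−2}B) (here the maps g_0, g_1 are taken in the appropriate degrees); equivalently, on dual spaces, Φ_{d,1} ∘ Φ_{d−1,0} = Φ_{d,0} ∘ Φ_{d−1,1}, where Φ_{d,ε} denotes the transpose of g_ε. -/
open scoped TensorProduct DirectSum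

set_option synthInstance.maxHeartbeats 1000000
set_option maxHeartbeats 2000000

namespace SingularHOMFLYPT

noncomputable section

/-!
Write a singular braid with `d` singular points as `α₀ τ_{i₁} α₁ ⋯ τ_{i_d} α_d` with nonsingular
blocks `αⱼ`. Deleting a letter `τ_{i_k}`, or replacing it by `σ_{i_k}`, leaves a word of the same
shape with one letter fewer: the blocks on both sides of the letter merge. Hence both
`g₁ ∘ g₀` and `g₀ ∘ g₁` send `[β]` to the sum, over ordered pairs `a ≠ b` of positions, of the
class of `β` with `τ_{i_a}` deleted and `τ_{i_b}` replaced by `σ_{i_b}`; only the order of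
summation differs. Since such classes span `Markov(⊔S_dB)`, the two maps agree.
-/

section Interleave

variable {M : Type*} [Monoid M]

def interleave {D : ℕ} (α : Fin (D + 1) → M) (g : Fin D → M) : M :=
  α 0 * (List.ofFn fun j : Fin D => g j * α j.succ).prod

-- `(α₀, …, α_{k-1}, α_k x α_{k+1}, α_{k+2}, …, α_{D+1})`
def mergeAt {D : ℕ} (α : Fin (D + 2) → M) (k : Fin (D + 1)) (x : M) : Fin (D + 1) → M :=
  Function.update (α ∘ k.succ.succAbove) k (α k.castSucc * x * α k.succ)

theorem interleave_succ {D : ℕ} (α : Fin (D + 2) → M) (g : Fin (D + 1) → M) :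
    interleave α g = α 0 * g 0 * interleave (Fin.tail α) (Fin.tail g) := by
  simp [interleave, List.ofFn_succ, Fin.tail, mul_assoc]

theorem interleave_update_zero_mul {D : ℕ} (α : Fin (D + 1) → M) (g : Fin D → M) (a : M) :
    interleave (Function.update α 0 (a * α 0)) g = a * interleave α g := by
  simp [interleave, mul_assoc]

theorem mergeAt_zero {D : ℕ} (α : Fin (D + 2) → M) (x : M) :
    mergeAt α 0 x = Function.update (Fin.tail α) 0 (α 0 * x * α 1) := by
  ext j
  cases j using Fin.cases <;> simp [mergeAt, Fin.tail]

theorem mergeAt_succ_zero {D : ℕ} (α : Fin (D + 3) → M) (k : Fin (D + 1)) (x : M) :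
    mergeAt α k.succ x 0 = α 0 := by
  simp [mergeAt, Function.update_of_ne (Fin.succ_ne_zero k).symm]

theorem tail_mergeAt_succ {D : ℕ} (α : Fin (D + 3) → M) (k : Fin (D + 1)) (x : M) :
    Fin.tail (mergeAt α k.succ x) = mergeAt (Fin.tail α) k x := by
  ext j
  simp [mergeAt, Fin.tail, Function.update_apply, Fin.succ_succAbove_succ]

theorem interleave_update_zero {D : ℕ} (α : Fin (D + 2) → M) (g : Fin (D + 1) → M) (x : M) :
    interleave α (Function.update g 0 x) = interleave (mergeAt α 0 x) (g ∘ Fin.succ) := by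
  rw [interleave_succ, Fin.tail_update_zero, Function.update_self, mergeAt_zero,
    show α 1 = Fin.tail α 0 from rfl, interleave_update_zero_mul]
  rfl

theorem interleave_update {D : ℕ} (α : Fin (D + 2) → M) (g : Fin (D + 1) → M)
    (k : Fin (D + 1)) (x : M) :
    interleave α (Function.update g k x) = interleave (mergeAt α k x) (g ∘ k.succAbove) := by
  induction D with
  | zero => rw [Fin.fin_one_eq_zero k]; exact interleave_update_zero α g x
  | succ D ih =>
    cases k using Fin.cases with
    | zero => exact interleave_update_zero α g x
    | succ k =>
      have htail : Fin.tail (g ∘ k.succ.succAbove) = Fin.tail g ∘ k.succAbove := by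
        ext j; simp [Fin.tail, Fin.succ_succAbove_succ]
      rw [interleave_succ, interleave_succ (mergeAt α k.succ x), Fin.tail_update_succ, ih,
        tail_mergeAt_succ, Function.update_of_ne (Fin.succ_ne_zero k).symm, mergeAt_succ_zero,
        htail, Function.comp_apply, Fin.succ_succAbove_zero]

end Interleave

section SingularWords

variable {m : ℕ}

theorem degM_mk_of (a : SBGen m) : degM (SB.mk (FreeMonoid.of a)) = degGen a := by
  simp [degM]

theorem degM_RepGen (ε : Bool) (i : Fin (m - 1)) : degM (RepGen ε i) = 1 := by
  cases ε <;> simp [RepGen, sG, degM_mk_of, degGen]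

theorem sbWord_eq_interleave {D : ℕ} (α : Fin (D + 1) → SB m) (idx : Fin D → Fin (m - 1)) :
    sbWord α idx = interleave α (tauG ∘ idx) := rfl

theorem sbWordRepl_eq_interleave {D : ℕ} (α : Fin (D + 1) → SB m) (idx : Fin D → Fin (m - 1))
    (k : Fin D) (x : SB m) :
    sbWordRepl α idx k x = interleave α (Function.update (tauG ∘ idx) k x) := by
  simp only [sbWordRepl, interleave, Function.update_apply, Function.comp_apply]

theorem sbWordRepl_eq_sbWord {D : ℕ} (α : Fin (D + 2) → SB m) (idx : Fin (D + 1) → Fin (m - 1))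
    (k : Fin (D + 1)) (x : SB m) :
    sbWordRepl α idx k x = sbWord (mergeAt α k x) (idx ∘ k.succAbove) := by
  rw [sbWordRepl_eq_interleave, interleave_update]
  rfl

theorem sbWordRepl_mergeAt {D : ℕ} (α : Fin (D + 2) → SB m) (idx : Fin (D + 1) → Fin (m - 1))
    (k : Fin (D + 1)) (x : SB m) (l : Fin D) (y : SB m) :
    sbWordRepl (mergeAt α k x) (idx ∘ k.succAbove) l y =
      interleave α (Function.update (Function.update (tauG ∘ idx) (k.succAbove l) y) k x) := by
  rw [sbWordRepl_eq_interleave, interleave_update, ← Function.comp_assoc,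
    Function.update_comp_eq_of_injective _ Fin.succAbove_right_injective]

theorem degM_mergeAt {D : ℕ} {α : Fin (D + 2) → SB m} (hα : ∀ j, degM (α j) = 1)
    (k : Fin (D + 1)) {x : SB m} (hx : degM x = 1) (j : Fin (D + 1)) :
    degM (mergeAt α k x j) = 1 := by
  rcases eq_or_ne j k with rfl | hj
  · simp [mergeAt, hα, hx]
  · simp [mergeAt, Function.update_of_ne hj, hα]

theorem SB.induction_on {motive : SB m → Prop} (β : SB m) (one : motive 1)
    (of_mul : ∀ a β, motive β → motive (SB.mk (FreeMonoid.of a) * β)) : motive β := by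
  induction β using Con.induction_on with | _ w => ?_
  induction w using FreeMonoid.inductionOn' with
  | one => exact one
  | of_mul a w ih => exact of_mul a _ ih

theorem exists_sbWord_eq {D : ℕ} (β : SB m) (hβ : degM β = Multiplicative.ofAdd D) :
    ∃ (α : Fin (D + 1) → SB m) (idx : Fin D → Fin (m - 1)),
      (∀ j, degM (α j) = 1) ∧ sbWord α idx = β := by
  induction β using SB.induction_on generalizing D with
  | one =>
    obtain rfl : D = 0 := by simpa using congrArg Multiplicative.toAdd hβ.symm
    exact ⟨fun _ => 1, Fin.elim0, fun _ => map_one _, by simp [sbWord]⟩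
  | of_mul a β ih =>
    obtain ⟨D', hβ'⟩ : ∃ D', degM β = Multiplicative.ofAdd D' := ⟨_, rfl⟩
    obtain ⟨α, idx, hα, rfl⟩ := ih hβ'
    rw [map_mul, degM_mk_of, hβ'] at hβ
    cases a with
    | tau i =>
      obtain rfl : D = D' + 1 := by
        simpa [degGen, add_comm] using congrArg Multiplicative.toAdd hβ.symm
      refine ⟨Fin.cons 1 α, Fin.cons i idx, Fin.cases (map_one _) hα, ?_⟩
      rw [sbWord_eq_interleave, interleave_succ]
      simp only [Fin.cons_zero, one_mul, Fin.tail_cons, Function.comp_apply]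
      rfl
    | pos i | neg i =>
      obtain rfl : D = D' := by simpa [degGen] using hβ.symm
      refine ⟨Function.update α 0 (SB.mk (FreeMonoid.of _) * α 0), idx, ?_,
        interleave_update_zero_mul _ _ _⟩
      intro j
      rcases eq_or_ne j 0 with rfl | hj
      · simp [degM_mk_of, degGen, hα]
      · simp [Function.update_of_ne hj, hα]

end SingularWords

theorem sum_sum_succAbove_swap {N : Type*} [AddCommGroup N] {n : ℕ}
    (F : Fin (n + 1) → Fin (n + 1) → N) :
    ∑ k, ∑ l : Fin n, F k (k.succAbove l) = ∑ k, ∑ l : Fin n, F (k.succAbove l) k := by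
  have hrow (k : Fin (n + 1)) : ∑ l : Fin n, F k (k.succAbove l) = ∑ b, F k b - F k k := by
    rw [Fin.sum_univ_succAbove (F k) k]; abel
  have hcol (k : Fin (n + 1)) : ∑ l : Fin n, F (k.succAbove l) k = ∑ a, F a k - F k k := by
    rw [Fin.sum_univ_succAbove (F · k) k]; abel
  simp only [hrow, hcol, Finset.sum_sub_distrib]
  rw [Finset.sum_comm]

theorem MarkovD.linearMap_ext {d : ℕ} {N : Type*} [AddCommGroup N] [Module Lqz N]
    {f f' : MarkovD d →ₗ[Lqz] N}
    (h : ∀ m (hm : 0 < m) (β : SB m), degM β = Multiplicative.ofAdd d →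
      f (classD d m hm β) = f' (classD d m hm β)) :
    f = f' := by
  refine Submodule.linearMap_qext _ <| DirectSum.linearMap_ext Lqz fun i => ?_
  refine LinearMap.ext_on Submodule.span_span_coe_preimage ?_
  rintro ⟨_, _⟩ ⟨β, hβ, rfl⟩
  have hβ' := h i.1 i.2 β hβ
  rw [classD, dif_pos hβ] at hβ'
  exact hβ'

theorem IsG.comp_apply_classD_sbWord {e : ℕ} {ε ε' : Bool}
    {g : MarkovD (e + 2) →ₗ[Lqz] MarkovD (e + 1)} {g' : MarkovD (e + 1) →ₗ[Lqz] MarkovD e}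
    (hg : IsG (e + 2) ε g) (hg' : IsG (e + 1) ε' g') {m : ℕ} (hm : 0 < m)
    (α : Fin (e + 3) → SB m) (idx : Fin (e + 2) → Fin (m - 1)) (hα : ∀ j, degM (α j) = 1) :
    g' (g (classD (e + 2) m hm (sbWord α idx))) =
      ∑ k : Fin (e + 2), ∑ l : Fin (e + 1), classD e m hm (interleave α
        (Function.update (Function.update (tauG ∘ idx) k (RepGen ε (idx k)))
          (k.succAbove l) (RepGen ε' (idx (k.succAbove l))))) := by
  rw [hg m hm α idx hα, map_sum]
  refine Finset.sum_congr rfl fun k _ => ?_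
  rw [sbWordRepl_eq_sbWord]
  refine (hg' m hm _ _ (degM_mergeAt hα k (degM_RepGen ε (idx k)))).trans ?_
  refine Finset.sum_congr rfl fun l _ => ?_
  rw [sbWordRepl_mergeAt, Function.update_comm (Fin.succAbove_ne k l).symm]
  rfl

/-- For every `d ≥ 2`, `g_1 ∘ g_0 = g_0 ∘ g_1` as linear maps
`Markov(⊔S_dB) → Markov(⊔S_{d-2}B)` (the maps `g_0, g_1` being taken in the appropriate
degrees); equivalently, on dual spaces, `Φ_{d,1} ∘ Φ_{d-1,0} = Φ_{d,0} ∘ Φ_{d-1,1}`. -/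
theorem g_maps_commute (d : ℕ) (hd : 2 ≤ d)
    (g0 : MarkovD d →ₗ[Lqz] MarkovD (d - 1)) (g1 : MarkovD d →ₗ[Lqz] MarkovD (d - 1))
    (g0' : MarkovD (d - 1) →ₗ[Lqz] MarkovD (d - 1 - 1))
    (g1' : MarkovD (d - 1) →ₗ[Lqz] MarkovD (d - 1 - 1))
    (h0 : IsG d false g0) (h1 : IsG d true g1)
    (h0' : IsG (d - 1) false g0') (h1' : IsG (d - 1) true g1') :
    g1'.comp g0 = g0'.comp g1 := by
  obtain ⟨e, rfl⟩ : ∃ e, d = e + 2 := ⟨d - 2, by omega⟩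
  refine MarkovD.linearMap_ext fun m hm β hβ => ?_
  obtain ⟨α, idx, hα, rfl⟩ := exists_sbWord_eq β hβ
  let F (a b : Fin (e + 2)) : MarkovD e := classD e m hm (interleave α
    (Function.update (Function.update (tauG ∘ idx) a 1) b (sG (idx b))))
  calc g1' (g0 (classD (e + 2) m hm (sbWord α idx)))
      = ∑ k, ∑ l, F k (k.succAbove l) := IsG.comp_apply_classD_sbWord h0 h1' hm α idx hα
    _ = ∑ k, ∑ l, F (k.succAbove l) k := sum_sum_succAbove_swap F
    _ = g0' (g1 (classD (e + 2) m hm (sbWord α idx))) := by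
      rw [IsG.comp_apply_classD_sbWord h1 h0' hm α idx hα]
      simp only [F, Function.update_comm (Fin.succAbove_ne _ _)]
      rfl

end
end SingularHOMFLYPT
end
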